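/- arXiv:1802.00316 — 2 statements merged into one kernel-verified Lean document; each statement's English description precedes it below -/
import Mathlib

section
/- Let k be a field, ε ∈ k with ε² = 1, and let V be a 2-dimensional k-vector space with basis x₁, x₂. Define the linear map c : V ⊗ V → V ⊗ V by c(x_i ⊗ x₁) = ε x₁ ⊗ x_i and c(x_i ⊗ x₂) = (ε x₂ + x₁) ⊗ x_i for i = 1,2. Then c is bijective and satisfies the braid equation (c ⊗ id)(id ⊗ c)(c ⊗ id) = (id ⊗ c)(c ⊗ id)(id ⊗ c) on V ⊗ V ⊗ V. -/
/-!
On pure tensors `c (v ⊗ w) = J w ⊗ v`, where `J = ε + N` is the Jordan block with `N x₂ = x₁`,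
`N x₁ = 0`. Every map of the shape `v ⊗ w ↦ f w ⊗ v` satisfies the braid equation, since both
sides send `u ⊗ v ⊗ w` to `f (f w) ⊗ f v ⊗ u`, and it is bijective as soon as `f` is. Finally `J` is
invertible because `N` is nilpotent and `ε² = 1` makes `ε` a unit.
-/

open TensorProduct

section FlipBraiding

variable {R M : Type*} [CommSemiring R] [AddCommMonoid M] [Module R M]

def flipBraiding (f : M →ₗ[R] M) : M ⊗[R] M →ₗ[R] M ⊗[R] M :=
  f.rTensor M ∘ₗ (TensorProduct.comm R M M).toLinearMap

@[simp]
theorem flipBraiding_tmul (f : M →ₗ[R] M) (v w : M) : flipBraiding f (v ⊗ₜ w) = f w ⊗ₜ v := rfl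

theorem flipBraiding_bijective {f : M →ₗ[R] M} (hf : Function.Bijective f) :
    Function.Bijective (flipBraiding f) :=
  (map_bijective hf Function.bijective_id).comp (TensorProduct.comm R M M).bijective

theorem flipBraiding_braid_equation (f : M →ₗ[R] M) :
    let c := flipBraiding f
    let α := TensorProduct.assoc R M M M
    c.rTensor M ∘ₗ (α.symm.toLinearMap ∘ₗ c.lTensor M ∘ₗ α.toLinearMap) ∘ₗ c.rTensor M =
      (α.symm.toLinearMap ∘ₗ c.lTensor M ∘ₗ α.toLinearMap) ∘ₗ c.rTensor M ∘ₗ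
        (α.symm.toLinearMap ∘ₗ c.lTensor M ∘ₗ α.toLinearMap) :=
  TensorProduct.ext_threefold fun _ _ _ => rfl

end FlipBraiding

section JordanBlock

variable {R : Type*} [CommRing R]

def jordanBlock (ε : R) : Module.End R (Fin 2 → R) :=
  ε • 1 + (LinearMap.proj 1).smulRight (Pi.single 0 1)

theorem jordanBlock_single_zero (ε : R) : jordanBlock ε (Pi.single 0 1) = ε • Pi.single 0 1 := by
  simp [jordanBlock]

theorem jordanBlock_single_one (ε : R) :
    jordanBlock ε (Pi.single 1 1) = ε • Pi.single 1 1 + Pi.single 0 1 := by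
  simp [jordanBlock]

theorem isUnit_jordanBlock {ε : R} (hε : IsUnit ε) : IsUnit (jordanBlock ε) := by
  have hnil : IsNilpotent
      ((LinearMap.proj 1).smulRight (Pi.single 0 1) : Module.End R (Fin 2 → R)) :=
    ⟨2, by ext; simp [pow_two]⟩
  have hunit : IsUnit (ε • 1 : Module.End R (Fin 2 → R)) := by
    simpa [Algebra.algebraMap_eq_smul_one] using hε.map (algebraMap R (Module.End R (Fin 2 → R)))
  exact hnil.isUnit_add_left_of_commute hunit ((Commute.one_right _).smul_right ε)

end JordanBlock

theorem jordan_block_braiding_bijective_and_braid_equation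
    (k : Type*) [Field k] (ε : k) (hε : ε ^ 2 = 1)
    (x : Fin 2 → (Fin 2 → k)) (hx : ∀ i, x i = Pi.single i 1)
    (c : ((Fin 2 → k) ⊗[k] (Fin 2 → k)) →ₗ[k] ((Fin 2 → k) ⊗[k] (Fin 2 → k)))
    (hc1 : ∀ i, c (x i ⊗ₜ[k] x 0) = (ε • x 0) ⊗ₜ[k] x i)
    (hc2 : ∀ i, c (x i ⊗ₜ[k] x 1) = (ε • x 1 + x 0) ⊗ₜ[k] x i) :
    let V := Fin 2 → k
    let α := TensorProduct.assoc k V V V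
    let c₁₂ : ((V ⊗[k] V) ⊗[k] V) →ₗ[k] ((V ⊗[k] V) ⊗[k] V) :=
      TensorProduct.map c LinearMap.id
    let c₂₃ : ((V ⊗[k] V) ⊗[k] V) →ₗ[k] ((V ⊗[k] V) ⊗[k] V) :=
      α.symm.toLinearMap ∘ₗ TensorProduct.map LinearMap.id c ∘ₗ α.toLinearMap
    Function.Bijective c ∧ c₁₂ ∘ₗ c₂₃ ∘ₗ c₁₂ = c₂₃ ∘ₗ c₁₂ ∘ₗ c₂₃ := by
  obtain rfl : x = fun i => Pi.single i 1 := funext hx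
  have hc : c = flipBraiding (jordanBlock ε) := by
    let b := Pi.basisFun k (Fin 2)
    refine (b.tensorProduct b).ext fun ⟨i, j⟩ => ?_
    fin_cases j
    · simp [b, hc1, jordanBlock_single_zero]
    · simp [b, hc2, jordanBlock_single_one]
  have hunit : IsUnit ε := (isUnit_pow_iff two_ne_zero).mp (hε ▸ isUnit_one)
  subst hc
  exact ⟨flipBraiding_bijective ((Module.End.isUnit_iff _).mp (isUnit_jordanBlock hunit)),
    flipBraiding_braid_equation _⟩
end

section
/- Let R be an associative ring, α, β, γ central elements of R, and u₀, u₁, u₂ ∈ R satisfying u₁u₀ = α·u₀u₁, u₂u₁ = α·u₁u₂, and u₂u₀ = β·u₀u₂ + γ·u₁². Then for all n ∈ ℕ: u₂·u₀ⁿ = βⁿ·u₀ⁿ·u₂ + γ·(∑_{j=0}^{n-1} β^j α^{2(n-1-j)})·u₀^{n-1}·u₁². -/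
/-!
With `a = u₀`, `b = u₂`, `y = u₁²` and `q = α²`, the relation `u₁u₀ = α u₀u₁` gives `y a = q a y`.
Moving `b` past `a^(n+1) = a^n a` with `b a = β a b + γ y` then shows that the coefficient of
`γ a^n y` satisfies `cₙ₊₁ = βⁿ + q cₙ`, the recurrence of the two-variable geometric sum
`∑ βʲ q^(n-1-j)`.
-/

open Finset

section

variable {R : Type*} [Ring R]

theorem pow_mul_eq_of_mul_eq_mul {q a b : R} (hqb : Commute q b) (h : b * a = q * (a * b))
    (m : ℕ) :
    b ^ m * a = q ^ m * (a * b ^ m) := by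
  induction m with
  | zero => simp
  | succ m ih =>
    calc b ^ (m + 1) * a = b ^ m * (q * (a * b)) := by rw [pow_succ, mul_assoc, h]
      _ = q * (b ^ m * a) * b := by rw [(hqb.pow_right m).symm.left_comm, mul_assoc, mul_assoc]
      _ = q ^ (m + 1) * (a * b ^ (m + 1)) := by rw [ih, pow_succ', pow_succ]; simp only [mul_assoc]

theorem mul_pow_succ_eq_of_mul_eq_add {β γ q a b y : R} (hβ : ∀ r, Commute β r)
    (hγ : ∀ r, Commute γ r) (hq : ∀ r, Commute q r)
    (hba : b * a = β * (a * b) + γ * y) (hya : y * a = q * (a * y)) (n : ℕ) :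
    b * a ^ (n + 1) =
      β ^ (n + 1) * (a ^ (n + 1) * b) +
        γ * (∑ j ∈ range (n + 1), β ^ j * q ^ (n - j)) * (a ^ n * y) := by
  induction n with
  | zero => simpa using hba
  | succ n ih =>
    set c := ∑ j ∈ range (n + 1), β ^ j * q ^ (n - j)
    have hc : ∑ j ∈ range (n + 2), β ^ j * q ^ (n + 1 - j) = β ^ (n + 1) + q * c :=
      (hβ q).geom_sum₂_succ_eq
    have hβγ : Commute (β ^ (n + 1)) γ := ((hγ _).pow_right _).symm
    calc b * a ^ (n + 2) = β ^ (n + 1) * (a ^ (n + 1) * (b * a)) + γ * c * (a ^ n * (y * a)) := by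
          rw [pow_succ, ← mul_assoc, ih, add_mul]; simp only [mul_assoc]
      _ = β ^ (n + 1) * (β * (a ^ (n + 2) * b)) + β ^ (n + 1) * (γ * (a ^ (n + 1) * y)) +
            γ * c * (q * (a ^ (n + 1) * y)) := by
          rw [hba, hya, mul_add, mul_add, (hβ _).symm.left_comm, (hγ _).symm.left_comm,
            (hq _).symm.left_comm]
          simp only [pow_succ, mul_assoc]
      _ = β ^ (n + 2) * (a ^ (n + 2) * b) + γ * (β ^ (n + 1) + q * c) * (a ^ (n + 1) * y) := by
          rw [← mul_assoc, ← pow_succ, ← mul_assoc (β ^ (n + 1)), hβγ.eq, mul_assoc γ c,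
            (hq c).symm.left_comm]
          simp only [mul_add, add_mul, mul_assoc, add_assoc]
      _ = _ := by rw [hc]

end

theorem typeB2_straightening_general (R : Type*) [Ring R] (α β γ : R)
    (hα : ∀ r : R, Commute α r) (hβ : ∀ r : R, Commute β r) (hγ : ∀ r : R, Commute γ r)
    (u₀ u₁ u₂ : R)
    (h10 : u₁ * u₀ = α * (u₀ * u₁))
    (h20 : u₂ * u₀ = β * (u₀ * u₂) + γ * u₁ ^ 2) :
    ∀ n : ℕ, u₂ * u₀ ^ n =
      β ^ n * (u₀ ^ n * u₂) +
        γ * (∑ j ∈ Finset.range n, β ^ j * α ^ (2 * (n - 1 - j))) * (u₀ ^ (n - 1) * u₁ ^ 2) := by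
  have hα2 : ∀ r, Commute (α ^ 2) r := fun r => (hα r).pow_left 2
  rintro (_ | n)
  · simp
  · simpa [pow_mul] using mul_pow_succ_eq_of_mul_eq_add hβ hγ hα2 h20
      (pow_mul_eq_of_mul_eq_mul (hα _) h10 2) n

theorem typeB2_straightening (R : Type*) [Ring R] (α β γ : R)
    (hα : ∀ r : R, Commute α r) (hβ : ∀ r : R, Commute β r) (hγ : ∀ r : R, Commute γ r)
    (u₀ u₁ u₂ : R)
    (h10 : u₁ * u₀ = α * (u₀ * u₁))
    (h21 : u₂ * u₁ = α * (u₁ * u₂))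
    (h20 : u₂ * u₀ = β * (u₀ * u₂) + γ * u₁ ^ 2) :
    ∀ n : ℕ, u₂ * u₀ ^ n =
      β ^ n * (u₀ ^ n * u₂) +
        γ * (∑ j ∈ Finset.range n, β ^ j * α ^ (2 * (n - 1 - j))) * (u₀ ^ (n - 1) * u₁ ^ 2) :=
  typeB2_straightening_general R α β γ hα hβ hγ u₀ u₁ u₂ h10 h20
end
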